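/- arXiv:2412.03113 — 2 statements merged into one kernel-verified Lean document; each statement's English description precedes it below -/
import Mathlib

section
/- For integers 0 ≤ ℓ < k ≤ n, the function λ ↦ ((σ_k(λ)/C(n,k)) / (σ_ℓ(λ)/C(n,ℓ)))^{1/(k-ℓ)} is strictly increasing on the cone Γ_k: if λ ∈ Γ_k and μ_i ≥ λ_i for all i with μ ≠ λ, then the value at μ is strictly greater than at λ. -/
/-- The k-th elementary symmetric function on ℝ^n. -/
noncomputable def esymm (n k : ℕ) (l : Fin n → ℝ) : ℝ :=
  ∑ s ∈ Finset.powersetCard k (Finset.univ : Finset (Fin n)), ∏ i ∈ s, l i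

/-!
Raise the coordinates one at a time. If `t` collects the other coordinates, then
`σ_j(a, t) = σ_j(t) + a σ_{j-1}(t)`, so
`σ_k(b, t) σ_ℓ(a, t) - σ_k(a, t) σ_ℓ(b, t) = (b - a) (σ_{k-1}(t) σ_ℓ(t) - σ_k(t) σ_{ℓ-1}(t))`.
This is positive for `a < b`: deleting a coordinate maps `Γ_k` into `Γ_{k-1}`, and on `Γ_{k-1}`
the ratios `σ_{j+1}(t) / σ_j(t)` strictly decrease for `j < k`. Both facts follow from Newton's
inequalities `E_j E_{j+2} ≤ E_{j+1}²` for the means `E_j = σ_j / C(m, j)` of a real multiset of size `m`.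
Newton's inequalities are preserved when the multiset is replaced by the (real, by Rolle) roots
of the derivative of `∏ (X + a)`; this reduces them to size `j + 2`, where inverting the points
turns them into the Cauchy–Schwarz inequality `σ_1² ≤ m Σ x²`.
-/

open Polynomial

theorem Nat.choose_mul_choose_add_two_lt_sq {m j : ℕ} (h : j + 2 ≤ m) :
    m.choose j * m.choose (j + 2) < m.choose (j + 1) ^ 2 := by
  obtain ⟨r, rfl⟩ := Nat.exists_eq_add_of_le h
  have h1 := Nat.choose_succ_right_eq (j + 2 + r) j
  have h2 := Nat.choose_succ_right_eq (j + 2 + r) (j + 1)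
  rw [show j + 2 + r - j = r + 2 by omega] at h1
  rw [show j + 2 + r - (j + 1) = r + 1 by omega] at h2
  have hpos : 0 < (j + 2 + r).choose j * (j + 2 + r).choose (j + 1) :=
    Nat.mul_pos (Nat.choose_pos (by omega)) (Nat.choose_pos (by omega))
  refine Nat.lt_of_mul_lt_mul_right (a := (j + 1) * (j + 2)) ?_
  calc _ = (j + 2 + r).choose j * (j + 2 + r).choose (j + 1) * ((j + 1) * (r + 1)) := by
        linear_combination ((j + 2 + r).choose j * (j + 1)) * h2
    _ < (j + 2 + r).choose j * (j + 2 + r).choose (j + 1) * ((r + 2) * (j + 2)) :=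
        Nat.mul_lt_mul_of_pos_left (by nlinarith) hpos
    _ = _ := by linear_combination ((j + 2 + r).choose (j + 1) * (j + 2)) * h1.symm

theorem mul_lt_mul_of_strict_log_concave {f : ℕ → ℝ} {n : ℕ} (hpos : ∀ i ≤ n, 0 < f i)
    (hf : ∀ i, i + 2 ≤ n → f i * f (i + 2) < f (i + 1) ^ 2) {l m : ℕ} (hlm : l < m)
    (hmn : m < n) : f (m + 1) * f l < f m * f (l + 1) := by
  induction m, hlm using Nat.le_induction with
  | base => nlinarith [hf l (by omega)]
  | succ m hlm ih =>
    have h1 := mul_lt_mul_of_pos_right (hf m (by omega)) (hpos l (by omega))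
    have h2 := mul_lt_mul_of_pos_left (ih (by omega)) (hpos (m + 1) (by omega))
    refine lt_of_mul_lt_mul_left ?_ (hpos m (by omega)).le
    nlinarith

namespace Multiset

section CommSemiring

variable {R : Type*} [CommSemiring R]

@[simp] theorem esymm_zero (s : Multiset R) : s.esymm 0 = 1 := by
  simp [esymm]

theorem esymm_eq_zero_of_card_lt {s : Multiset R} {j : ℕ} (h : card s < j) : s.esymm j = 0 := by
  simp [esymm, powersetCard_eq_empty _ h]

theorem esymm_cons_succ (a : R) (s : Multiset R) (j : ℕ) :
    (a ::ₘ s).esymm (j + 1) = s.esymm (j + 1) + a * s.esymm j := by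
  simp only [esymm, powersetCard_cons, map_add, sum_add, map_map, Function.comp_def, prod_cons,
    sum_map_mul_left]

theorem esymm_one (s : Multiset R) : s.esymm 1 = s.sum := by
  induction s using Multiset.induction with
  | empty => exact esymm_eq_zero_of_card_lt (by simp)
  | cons a s ih => rw [esymm_cons_succ, ih, esymm_zero, sum_cons]; ring

theorem esymm_card (s : Multiset R) : s.esymm (card s) = s.prod := by
  induction s using Multiset.induction with
  | empty => simp
  | cons a s ih =>
    rw [card_cons, esymm_cons_succ, esymm_eq_zero_of_card_lt (Nat.lt_succ_self _), ih, prod_cons]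
    ring

end CommSemiring

theorem sq_sum_eq_sum_map_sq_add_two_mul_esymm_two {R : Type*} [CommRing R] (s : Multiset R) :
    s.sum ^ 2 = (s.map (· ^ 2)).sum + 2 * s.esymm 2 := by
  induction s using Multiset.induction with
  | empty => rw [esymm_eq_zero_of_card_lt (by simp)]; simp
  | cons a s ih =>
    rw [sum_cons, map_cons, sum_cons, esymm_cons_succ, esymm_one]
    linear_combination ih

theorem esymm_map_inv_mul_prod {K : Type*} [Field K] {s : Multiset K} (hs : (0 : K) ∉ s)
    {i j : ℕ} (hij : i + j = card s) : (s.map (·⁻¹)).esymm i * s.prod = s.esymm j := by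
  induction s using Multiset.induction generalizing i j with
  | empty =>
    obtain ⟨rfl, rfl⟩ : i = 0 ∧ j = 0 := by simpa using hij
    simp
  | cons a s ih =>
    obtain ⟨ha, hs⟩ : a ≠ 0 ∧ (0 : K) ∉ s := by simpa [eq_comm] using hs
    rw [card_cons] at hij
    rw [map_cons, prod_cons]
    match i, j, hij with
    | 0, j, hij =>
      obtain rfl : j = card s + 1 := by omega
      rw [esymm_zero, one_mul, ← prod_cons, ← card_cons, esymm_card]
    | i + 1, 0, hij =>
      have h := ih hs (i := i) (j := 0) (by omega)
      rw [esymm_cons_succ, esymm_eq_zero_of_card_lt (by simp; omega), esymm_zero]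
      rw [esymm_zero] at h
      rw [zero_add, ← h, mul_mul_mul_comm, inv_mul_cancel₀ ha, one_mul]
    | i + 1, j + 1, hij =>
      rw [esymm_cons_succ, esymm_cons_succ, ← ih hs (by omega : i + (j + 1) = card s),
        ← ih hs (by omega : (i + 1) + j = card s)]
      field_simp
      ring

theorem sq_sum_le_card_mul_sum_map_sq {R : Type*} [CommRing R] [LinearOrder R]
    [IsStrictOrderedRing R] (s : Multiset R) : s.sum ^ 2 ≤ card s * (s.map (· ^ 2)).sum := by
  classical
  have hsq : ∑ p ∈ s.toEnumFinset, p.1 ^ 2 = (s.map (· ^ 2)).sum := by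
    conv_rhs => rw [← map_toEnumFinset_fst s, map_map]
    rfl
  calc s.sum ^ 2 = (∑ p ∈ s.toEnumFinset, p.1) ^ 2 := by rw [sum_eq_sum_toEnumFinset]
    _ ≤ _ := sq_sum_le_card_mul_sum_sq
    _ = card s * (s.map (· ^ 2)).sum := by rw [card_toEnumFinset, hsq]

noncomputable def esymmMean {K : Type*} [Field K] (s : Multiset K) (j : ℕ) : K :=
  s.esymm j / (card s).choose j

theorem prod_X_add_C_eq_prod_X_sub_C_neg {R : Type*} [CommRing R] (s : Multiset R) :
    (s.map fun a => X + C a).prod = ((s.map Neg.neg).map fun a => X - C a).prod := by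
  simp [map_map, sub_eq_add_neg]

theorem exists_esymmMean_eq_of_card_eq_succ {s : Multiset ℝ} {m : ℕ} (hs : card s = m + 1) :
    ∃ t : Multiset ℝ, card t = m ∧ ∀ i ≤ m, t.esymmMean i = s.esymmMean i := by
  obtain ⟨P, hP⟩ : ∃ P, P = (s.map fun a => X + C a).prod := ⟨_, rfl⟩
  have hP_coeff : ∀ i ≤ m + 1, P.coeff (m + 1 - i) = s.esymm i := fun i hi => by
    rw [hP, prod_X_add_C_coeff s (by omega), hs, Nat.sub_sub_self hi]
  have hP_roots : card P.roots = m + 1 := by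
    rw [hP, prod_X_add_C_eq_prod_X_sub_C_neg, roots_multiset_prod_X_sub_C, card_map, hs]
  have hP_deg : P.natDegree = m + 1 := by
    rw [hP, prod_X_add_C_eq_prod_X_sub_C_neg, natDegree_multiset_prod_X_sub_C_eq_card, card_map, hs]
  obtain ⟨Q, hQ⟩ : ∃ Q, Q = derivative P := ⟨_, rfl⟩
  -- Rolle: `Q` has a root between any two roots of `P`, so all roots of `Q` are real
  have hQ_roots : card Q.roots = Q.natDegree ∧ Q.natDegree = m := by
    have := hQ ▸ card_roots_le_derivative P
    have := hQ ▸ natDegree_derivative_le P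
    have := card_roots' Q
    omega
  have hQ_coeff : ∀ i ≤ m, Q.coeff (m - i) = s.esymm i * (m + 1 - i) := fun i hi => by
    rw [hQ, coeff_derivative, show m - i + 1 = m + 1 - i by omega, hP_coeff i (by omega),
      Nat.cast_sub hi]
    ring
  have hQ_lead : Q.leadingCoeff = m + 1 := by
    rw [leadingCoeff, hQ_roots.2]
    simpa [esymm] using hQ_coeff 0 (Nat.zero_le m)
  have hQ_eq : Q = C ((m : ℝ) + 1) * ((Q.roots.map Neg.neg).map fun a => X + C a).prod := by
    rw [prod_X_add_C_eq_prod_X_sub_C_neg, ← hQ_lead]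
    simp only [map_map, Function.comp_def, neg_neg, map_id']
    exact (C_leadingCoeff_mul_prod_multiset_X_sub_C hQ_roots.1).symm
  refine ⟨Q.roots.map Neg.neg, by rw [card_map, hQ_roots.1, hQ_roots.2], fun i hi => ?_⟩
  have key := hQ_coeff i hi
  rw [hQ_eq, coeff_C_mul, prod_X_add_C_coeff _ (by simp [hQ_roots]), card_map, hQ_roots.1, hQ_roots.2,
    Nat.sub_sub_self hi] at key
  have hchoose : ((m + 1).choose i : ℝ) * (m + 1 - i) = m.choose i * (m + 1) := by
    rw [← Nat.cast_succ, ← Nat.cast_sub (by omega)]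
    exact_mod_cast (Nat.choose_mul_succ_eq m i).symm
  have hpos : ((m + 1).choose i : ℝ) ≠ 0 := by exact_mod_cast (Nat.choose_pos (by omega)).ne'
  have hpos' : (m.choose i : ℝ) ≠ 0 := by exact_mod_cast (Nat.choose_pos hi).ne'
  rw [esymmMean, esymmMean, card_map, hQ_roots.1, hQ_roots.2, hs, div_eq_div_iff hpos' hpos]
  apply mul_left_cancel₀ (show (m : ℝ) + 1 ≠ 0 by positivity)
  linear_combination ((m + 1).choose i : ℝ) * key + s.esymm i * hchoose

theorem esymmMean_eq_zero_of_card_lt {K : Type*} [Field K] {s : Multiset K} {j : ℕ}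
    (h : card s < j) : s.esymmMean j = 0 := by
  rw [esymmMean, esymm_eq_zero_of_card_lt h, zero_div]

theorem esymmMean_eq_esymmMean_map_inv_mul_prod {K : Type*} [Field K] {s : Multiset K}
    (hs : (0 : K) ∉ s) {i j : ℕ} (hij : i + j = card s) :
    s.esymmMean j = (s.map (·⁻¹)).esymmMean i * s.prod := by
  rw [esymmMean, esymmMean, card_map, div_mul_eq_mul_div, esymm_map_inv_mul_prod hs hij, ← hij,
    Nat.choose_symm_add]

theorem esymmMean_zero_mul_esymmMean_two_le_sq {K : Type*} [Field K] [LinearOrder K]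
    [IsStrictOrderedRing K] (s : Multiset K) :
    s.esymmMean 0 * s.esymmMean 2 ≤ s.esymmMean 1 ^ 2 := by
  rcases lt_or_ge (card s) 2 with hs | hs
  · rw [esymmMean_eq_zero_of_card_lt hs, mul_zero]
    positivity
  have hcs := sq_sum_le_card_mul_sum_map_sq s
  have hsq := sq_sum_eq_sum_map_sq_add_two_mul_esymm_two s
  have hm : (1 : K) ≤ card s - 1 := by
    have : (2 : K) ≤ card s := by exact_mod_cast hs
    linarith
  rw [esymmMean, esymmMean, esymmMean, esymm_zero, esymm_one, Nat.choose_zero_right,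
    Nat.choose_one_right, Nat.cast_choose_two, Nat.cast_one, div_one, one_mul, div_pow,
    div_le_div_iff₀ (by positivity) (by positivity)]
  nlinarith

theorem esymmMean_mul_esymmMean_le_sq_of_card_eq {K : Type*} [Field K] [LinearOrder K]
    [IsStrictOrderedRing K] {s : Multiset K} {j : ℕ} (hs : card s = j + 2) :
    s.esymmMean j * s.esymmMean (j + 2) ≤ s.esymmMean (j + 1) ^ 2 := by
  by_cases h0 : (0 : K) ∈ s
  · have : s.esymmMean (j + 2) = 0 := by
      rw [esymmMean, ← hs, esymm_card, prod_eq_zero h0, zero_div]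
    rw [this, mul_zero]
    positivity
  rw [esymmMean_eq_esymmMean_map_inv_mul_prod h0 (by omega : 2 + j = card s),
    esymmMean_eq_esymmMean_map_inv_mul_prod h0 (by omega : 1 + (j + 1) = card s),
    esymmMean_eq_esymmMean_map_inv_mul_prod h0 (by omega : 0 + (j + 2) = card s)]
  have := esymmMean_zero_mul_esymmMean_two_le_sq (s.map (·⁻¹))
  nlinarith [sq_nonneg s.prod]

theorem esymmMean_mul_esymmMean_le_sq (s : Multiset ℝ) (j : ℕ) :
    s.esymmMean j * s.esymmMean (j + 2) ≤ s.esymmMean (j + 1) ^ 2 := by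
  induction hm : card s generalizing s with
  | zero =>
    rw [esymmMean_eq_zero_of_card_lt (j := j + 2) (by omega), mul_zero]
    positivity
  | succ m ih =>
    rcases lt_trichotomy (m + 1) (j + 2) with hlt | heq | hgt
    · rw [esymmMean_eq_zero_of_card_lt (j := j + 2) (by omega), mul_zero]
      positivity
    · exact esymmMean_mul_esymmMean_le_sq_of_card_eq (by omega)
    · obtain ⟨t, ht, heq⟩ := exists_esymmMean_eq_of_card_eq_succ hm
      rw [← heq j (by omega), ← heq (j + 1) (by omega), ← heq (j + 2) (by omega)]
      exact ih t ht

theorem esymm_mul_esymm_lt_sq {s : Multiset ℝ} {j : ℕ} (h : 0 < s.esymm j * s.esymm (j + 2)) :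
    s.esymm j * s.esymm (j + 2) < s.esymm (j + 1) ^ 2 := by
  have hcard : j + 2 ≤ card s := by
    by_contra hlt
    rw [esymm_eq_zero_of_card_lt (j := j + 2) (by omega), mul_zero] at h
    exact h.false
  have hC0 : (0 : ℝ) < (card s).choose j := by exact_mod_cast Nat.choose_pos (by omega)
  have hC1 : (0 : ℝ) < (card s).choose (j + 1) := by exact_mod_cast Nat.choose_pos (by omega)
  have hC2 : (0 : ℝ) < (card s).choose (j + 2) := by exact_mod_cast Nat.choose_pos hcard
  have hC : ((card s).choose j : ℝ) * (card s).choose (j + 2) < ((card s).choose (j + 1)) ^ 2 := by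
    exact_mod_cast Nat.choose_mul_choose_add_two_lt_sq hcard
  have hN := esymmMean_mul_esymmMean_le_sq s j
  rw [esymmMean, esymmMean, esymmMean, div_mul_div_comm, div_pow,
    div_le_div_iff₀ (by positivity) (by positivity)] at hN
  have hσ : 0 < s.esymm (j + 1) ^ 2 := by nlinarith [mul_pos h (pow_pos hC1 2), mul_pos hC0 hC2]
  nlinarith

def gardingCone (k : ℕ) : Set (Multiset ℝ) :=
  {s | ∀ j ≤ k, 0 < s.esymm j}

theorem mem_gardingCone_of_cons_mem {a : ℝ} {t : Multiset ℝ} {k : ℕ}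
    (h : a ::ₘ t ∈ gardingCone (k + 1)) : t ∈ gardingCone k := by
  induction k with
  | zero =>
    intro j hj
    rw [Nat.le_zero.1 hj, esymm_zero]
    exact one_pos
  | succ k ih =>
    have ht : t ∈ gardingCone k := ih fun j hj => h j (by omega)
    intro j hj
    rcases Nat.lt_or_eq_of_le hj with hj | rfl
    · exact ht j (by omega)
    by_contra! hk
    have h1 := h (k + 1) (by omega)
    have h2 := h (k + 2) le_rfl
    rw [esymm_cons_succ] at h1 h2
    have h0 := ht k le_rfl
    have ha : 0 < a := pos_of_mul_pos_left (by linarith) h0.le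
    have hk2 : 0 < t.esymm (k + 2) := by nlinarith
    -- multiply `-σ_{k+1} < a σ_k` by `-a σ_{k+1} < σ_{k+2}`: this contradicts strict Newton
    have : a * t.esymm (k + 1) ^ 2 < a * (t.esymm k * t.esymm (k + 2)) := by
      nlinarith [mul_lt_mul'' (by linarith : -t.esymm (k + 1) < a * t.esymm k)
        (by linarith : -(a * t.esymm (k + 1)) < t.esymm (k + 2)) (by linarith) (by nlinarith)]
    have := lt_of_mul_lt_mul_left this ha.le
    exact (esymm_mul_esymm_lt_sq (by positivity)).not_gt this

theorem cons_mem_gardingCone_of_le {a b : ℝ} {t : Multiset ℝ} {k : ℕ} (hab : a ≤ b)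
    (h : a ::ₘ t ∈ gardingCone k) : b ::ₘ t ∈ gardingCone k := by
  rintro (_ | j) hj
  · rw [esymm_zero]
    exact one_pos
  have ht := mem_gardingCone_of_cons_mem (k := j) fun i hi => h i (by omega)
  have := h (j + 1) hj
  rw [esymm_cons_succ] at this ⊢
  nlinarith [ht j le_rfl]

theorem esymm_succ_mul_esymm_lt {t : Multiset ℝ} {k l : ℕ} (ht : t ∈ gardingCone k) (hlk : l < k) :
    t.esymm (k + 1) * t.esymm l < t.esymm k * t.esymm (l + 1) := by
  rcases le_or_gt (t.esymm (k + 1)) 0 with hk | hk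
  · nlinarith [ht l (by omega), ht k le_rfl, ht (l + 1) (by omega)]
  have ht' : t ∈ gardingCone (k + 1) := fun j hj => by
    rcases Nat.lt_or_eq_of_le hj with hj | rfl
    exacts [ht j (by omega), hk]
  exact mul_lt_mul_of_strict_log_concave ht' (fun i hi => esymm_mul_esymm_lt_sq
    (mul_pos (ht' i (by omega)) (ht' (i + 2) hi))) hlk (Nat.lt_succ_self k)

theorem esymm_mul_esymm_cons_lt {a b : ℝ} {t : Multiset ℝ} {k ℓ : ℕ} (hab : a < b) (hlk : ℓ < k)
    (h : a ::ₘ t ∈ gardingCone k) :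
    (a ::ₘ t).esymm k * (b ::ₘ t).esymm ℓ < (b ::ₘ t).esymm k * (a ::ₘ t).esymm ℓ := by
  obtain ⟨k, rfl⟩ : ∃ k', k = k' + 1 := ⟨k - 1, by omega⟩
  have ht := mem_gardingCone_of_cons_mem h
  rcases ℓ with _ | l
  · simp only [esymm_zero, mul_one, esymm_cons_succ]
    nlinarith [ht k le_rfl]
  · have hcross := esymm_succ_mul_esymm_lt ht (by omega : l < k)
    simp only [esymm_cons_succ]
    nlinarith [mul_pos (sub_pos.2 hab) (sub_pos.2 hcross)]

theorem esymm_div_esymm_cons_le {a b : ℝ} {t : Multiset ℝ} {k ℓ : ℕ} (hab : a ≤ b) (hlk : ℓ < k)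
    (h : a ::ₘ t ∈ gardingCone k) :
    (a ::ₘ t).esymm k / (a ::ₘ t).esymm ℓ ≤ (b ::ₘ t).esymm k / (b ::ₘ t).esymm ℓ := by
  rcases hab.eq_or_lt with rfl | hab
  · exact le_rfl
  rw [div_le_div_iff₀ (h ℓ hlk.le) (cons_mem_gardingCone_of_le hab.le h ℓ hlk.le)]
  exact (esymm_mul_esymm_cons_lt hab hlk h).le

end Multiset

open Finset Function

theorem Finset.map_univ_val_update {ι α : Type*} [Fintype ι] [DecidableEq ι] (f : ι → α) (i : ι)
    (c : α) : univ.val.map (update f i c) = c ::ₘ (univ.erase i).val.map f := by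
  rw [← Multiset.cons_erase (mem_univ_val i), Multiset.map_cons, update_self, ← erase_val,
    Multiset.map_congr rfl fun j hj => update_of_ne (ne_of_mem_erase hj) c f]

theorem Finset.map_univ_val_eq_cons {ι α : Type*} [Fintype ι] [DecidableEq ι] (f : ι → α)
    (i : ι) : univ.val.map f = f i ::ₘ (univ.erase i).val.map f := by
  simpa using map_univ_val_update f i (f i)

theorem Pi.le_induction_update {ι α : Type*} [Fintype ι] [DecidableEq ι] [Preorder α]
    (p : (ι → α) → Prop) {f g : ι → α} (hf : p f) (hfg : f ≤ g)
    (step : ∀ h i c, p h → h i ≤ c → p (update h i c)) : p g := by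
  suffices ∀ S : Finset ι, p (S.piecewise g f) by simpa using this univ
  intro S
  induction S using Finset.induction_on with
  | empty => simpa using hf
  | insert i S hi ih =>
    rw [piecewise_insert]
    exact step _ i _ ih (by rw [piecewise_eq_of_notMem _ _ _ hi]; exact hfg i)

namespace Multiset

variable {ι : Type*} [Fintype ι] [DecidableEq ι] {k ℓ : ℕ}

theorem map_univ_val_update_mem_gardingCone {f : ι → ℝ} {i : ι} {c : ℝ}
    (hf : univ.val.map f ∈ gardingCone k) (hc : f i ≤ c) :
    univ.val.map (update f i c) ∈ gardingCone k := by
  rw [map_univ_val_eq_cons f i] at hf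
  rw [map_univ_val_update]
  exact cons_mem_gardingCone_of_le hc hf

theorem esymm_div_esymm_le_update {f : ι → ℝ} {i : ι} {c : ℝ} (hf : univ.val.map f ∈ gardingCone k)
    (hc : f i ≤ c) (hlk : ℓ < k) :
    (univ.val.map f).esymm k / (univ.val.map f).esymm ℓ
      ≤ (univ.val.map (update f i c)).esymm k / (univ.val.map (update f i c)).esymm ℓ := by
  rw [map_univ_val_eq_cons f i] at hf ⊢
  rw [map_univ_val_update]
  exact esymm_div_esymm_cons_le hc hlk hf

theorem esymm_div_esymm_lt_update {f : ι → ℝ} {i : ι} {c : ℝ} (hf : univ.val.map f ∈ gardingCone k)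
    (hc : f i < c) (hlk : ℓ < k) :
    (univ.val.map f).esymm k / (univ.val.map f).esymm ℓ
      < (univ.val.map (update f i c)).esymm k / (univ.val.map (update f i c)).esymm ℓ := by
  rw [map_univ_val_eq_cons f i] at hf ⊢
  rw [map_univ_val_update, div_lt_div_iff₀ (hf ℓ hlk.le)
    (cons_mem_gardingCone_of_le hc.le hf ℓ hlk.le)]
  exact esymm_mul_esymm_cons_lt hc hlk hf

theorem esymm_div_esymm_le_of_le {f g : ι → ℝ} (hf : univ.val.map f ∈ gardingCone k) (hfg : f ≤ g)
    (hlk : ℓ < k) :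
    (univ.val.map f).esymm k / (univ.val.map f).esymm ℓ
      ≤ (univ.val.map g).esymm k / (univ.val.map g).esymm ℓ :=
  (Pi.le_induction_update (fun h => univ.val.map h ∈ gardingCone k ∧
      (univ.val.map f).esymm k / (univ.val.map f).esymm ℓ
        ≤ (univ.val.map h).esymm k / (univ.val.map h).esymm ℓ) ⟨hf, le_rfl⟩ hfg
    fun _ _ _ ⟨hh, hle⟩ hc => ⟨map_univ_val_update_mem_gardingCone hh hc,
      hle.trans (esymm_div_esymm_le_update hh hc hlk)⟩).2

theorem esymm_div_esymm_lt_of_le_of_ne {f g : ι → ℝ} (hf : univ.val.map f ∈ gardingCone k)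
    (hfg : f ≤ g) (hne : f ≠ g) (hlk : ℓ < k) :
    (univ.val.map f).esymm k / (univ.val.map f).esymm ℓ
      < (univ.val.map g).esymm k / (univ.val.map g).esymm ℓ := by
  obtain ⟨i, hi⟩ : ∃ i, f i < g i := by
    by_contra! h
    exact hne (le_antisymm hfg h)
  have hle : update f i (g i) ≤ g := update_le_iff.2 ⟨le_rfl, fun j _ => hfg j⟩
  exact (esymm_div_esymm_lt_update hf hi hlk).trans_le
    (esymm_div_esymm_le_of_le (map_univ_val_update_mem_gardingCone hf hi.le) hle hlk)

end Multiset

/-- The normalized ratio ((σ_k/C(n,k))/(σ_ℓ/C(n,ℓ)))^{1/(k-ℓ)} is strictly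
increasing on the cone Γ_k. -/
theorem esymm_ratio_strict_mono (n k ℓ : ℕ) (hlk : ℓ < k) (hkn : k ≤ n)
    (lam mu : Fin n → ℝ) (hlam : ∀ i ≤ k, 0 < esymm n i lam)
    (hge : ∀ i, lam i ≤ mu i) (hne : mu ≠ lam) :
    ((esymm n k lam / (n.choose k : ℝ)) / (esymm n ℓ lam / (n.choose ℓ : ℝ)))
        ^ ((1:ℝ) / ((k : ℝ) - (ℓ : ℝ)))
      < ((esymm n k mu / (n.choose k : ℝ)) / (esymm n ℓ mu / (n.choose ℓ : ℝ)))
        ^ ((1:ℝ) / ((k : ℝ) - (ℓ : ℝ))) := by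
  simp only [esymm, ← esymm_map_val] at hlam ⊢
  have hlt := Multiset.esymm_div_esymm_lt_of_le_of_ne hlam hge hne.symm hlk
  have hσk := hlam k le_rfl
  have hσℓ := hlam ℓ hlk.le
  have hC : (0 : ℝ) < n.choose k / n.choose ℓ := by
    have := Nat.choose_pos hkn
    have := Nat.choose_pos (hlk.le.trans hkn)
    positivity
  have hexp : (0 : ℝ) < 1 / (k - ℓ) := one_div_pos.2 (sub_pos.2 (by exact_mod_cast hlk))
  rw [div_div_div_comm, div_div_div_comm _ (n.choose k : ℝ)]
  exact Real.rpow_lt_rpow (by positivity) (div_lt_div_of_pos_right hlt hC) hexp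
end

section
/- For the G-polynomial G_p^{m,n,k}(x,y) := (1/k!) d^k/dt^k|_{t=0} ∫_0^{x+ty} s^m(1+tp+s)^n ds, with x > 0 and k ≥ 1, one has ∂G_p^{m,n,k}/∂y (x,y) = x^m (1+x)^n · σ_{k-1}(λ̌), where λ̌ ∈ ℝ^{m+n} has m components equal to y/x and n components equal to (p+y)/(1+x). -/
/-- The Fang–Lai polynomial G_p^{m,n,k}(x,y). -/
noncomputable def G (m n k : ℕ) (p x y : ℝ) : ℝ :=
  iteratedDeriv k (fun t => ∫ s in (0:ℝ)..(x + t * y), s ^ m * (1 + t * p + s) ^ n) 0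
    / (Nat.factorial k : ℝ)

open Polynomial

theorem Polynomial.iteratedDeriv_eval {𝕜 : Type*} [NontriviallyNormedField 𝕜] (P : 𝕜[X])
    (k : ℕ) : iteratedDeriv k (fun t => P.eval t) = fun t => (derivative^[k] P).eval t := by
  induction k with
  | zero => rfl
  | succ k ih =>
    ext t
    rw [iteratedDeriv_succ, ih, Function.iterate_succ_apply', Polynomial.deriv]

theorem Polynomial.iteratedDeriv_eval_zero {𝕜 : Type*} [NontriviallyNormedField 𝕜] (P : 𝕜[X])
    (k : ℕ) : iteratedDeriv k (fun t => P.eval t) 0 = (k.factorial : 𝕜) * P.coeff k := by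
  rw [iteratedDeriv_eval]
  dsimp only
  rw [← coeff_zero_eq_eval_zero, coeff_iterate_derivative, zero_add, Nat.descFactorial_self,
    nsmul_eq_mul]

theorem Polynomial.eval_eval_eq_eval_map {R : Type*} [CommSemiring R] (Φ : R[X][X]) (q : R[X])
    (t : R) : (Φ.eval q).eval t = (Φ.map (evalRingHom t)).eval (q.eval t) := by
  simpa [eval_map] using hom_eval₂ Φ (RingHom.id _) (evalRingHom t) q

theorem Polynomial.C_add_C_mul_X_eq_C_mul {R : Type*} [Field R] {a : R} (b : R) (ha : a ≠ 0) :
    C a + C b * X = C a * (1 + C (b / a) * X) := by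
  rw [mul_add, mul_one, ← mul_assoc, ← C_mul, mul_div_cancel₀ _ ha]

theorem pow_mul_pow_eq_prod_ite {α M : Type*} [CommMonoid M] (g : α → M) (a b : α) (m n : ℕ) :
    g a ^ m * g b ^ n = ∏ i : Fin (m + n), g (if (i : ℕ) < m then a else b) := by
  simp [Fin.prod_univ_add]

theorem coeff_prod_one_add_C_mul_X {N : ℕ} (l : Fin N → ℝ) (K : ℕ) :
    (∏ i, (1 + C (l i) * X)).coeff K = esymm N K l := by
  rw [Finset.prod_one_add, finsetSum_coeff, esymm, Finset.powersetCard_eq_filter,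
    Finset.sum_filter]
  refine Finset.sum_congr rfl fun s _ => ?_
  rw [Finset.prod_mul_distrib, Finset.prod_const, ← map_prod, coeff_C_mul_X_pow]
  simp only [eq_comm]

section CoeffDeriv

variable {𝕜 : Type*} [NontriviallyNormedField 𝕜]

def HasCoeffDerivAt (P : 𝕜 → 𝕜[X]) (P' : 𝕜[X]) (y : 𝕜) : Prop :=
  ∀ k, HasDerivAt (fun y => (P y).coeff k) (P'.coeff k) y

namespace HasCoeffDerivAt

variable {P Q : 𝕜 → 𝕜[X]} {P' Q' : 𝕜[X]} {y : 𝕜}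

theorem const (a : 𝕜[X]) (y : 𝕜) : HasCoeffDerivAt (fun _ => a) 0 y :=
  fun k => by simpa using hasDerivAt_const y (a.coeff k)

theorem add (hP : HasCoeffDerivAt P P' y) (hQ : HasCoeffDerivAt Q Q' y) :
    HasCoeffDerivAt (fun y => P y + Q y) (P' + Q') y :=
  fun k => by simpa using (hP k).fun_add (hQ k)

theorem mul (hP : HasCoeffDerivAt P P' y) (hQ : HasCoeffDerivAt Q Q' y) :
    HasCoeffDerivAt (fun y => P y * Q y) (P' * Q y + P y * Q') y := by
  intro k
  simp only [coeff_add, coeff_mul, ← Finset.sum_add_distrib]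
  exact HasDerivAt.fun_sum fun ij _ => (hP ij.1).mul (hQ ij.2)

theorem pow (hP : HasCoeffDerivAt P P' y) (n : ℕ) :
    HasCoeffDerivAt (fun y => P y ^ n) (n * P y ^ (n - 1) * P') y := by
  induction n with
  | zero => simpa using const 1 y
  | succ n ih =>
    convert ih.mul hP using 1
    · simp [pow_succ]
    · rcases n with _ | n
      · simp
      · simp only [Nat.cast_add, Nat.cast_one, add_tsub_cancel_right, pow_succ]
        ring

theorem eval (Φ : 𝕜[X][X]) (hP : HasCoeffDerivAt P P' y) :
    HasCoeffDerivAt (fun y => Φ.eval (P y)) (Φ.derivative.eval (P y) * P') y := by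
  induction Φ using Polynomial.induction_on' with
  | add Φ Ψ hΦ hΨ => simpa [add_mul] using hΦ.add hΨ
  | monomial n a =>
    convert (const a y).mul (hP.pow n) using 1
    · simp
    · simp only [derivative_monomial, eval_monomial, zero_mul, zero_add]
      ring

end HasCoeffDerivAt

theorem hasCoeffDerivAt_C_add_C_mul_X (x y : 𝕜) :
    HasCoeffDerivAt (fun y => C x + C y * X) X y := by
  intro k
  simp only [coeff_add, coeff_C_mul]
  simpa using ((hasDerivAt_id y).mul_const (X.coeff k : 𝕜)).const_add ((C x).coeff k)

end CoeffDeriv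

/- In `ℝ[X][X]` the inner variable is `t` and the outer one is `s`: `gIntegrand m n p` is
`sᵐ (1 + p t + s)ⁿ` and `gPrimitive m n p` its primitive in `s` vanishing at `s = 0`. -/

noncomputable def gIntegrand (m n : ℕ) (p : ℝ) : ℝ[X][X] :=
  X ^ m * (X + C (1 + C p * X)) ^ n

noncomputable def gPrimitive (m n : ℕ) (p : ℝ) : ℝ[X][X] :=
  ∑ j ∈ Finset.range (n + 1),
    C (C ((n.choose j : ℝ) / (m + j + 1)) * (1 + C p * X) ^ (n - j)) * X ^ (m + j + 1)

theorem derivative_gPrimitive (m n : ℕ) (p : ℝ) :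
    derivative (gPrimitive m n p) = gIntegrand m n p := by
  rw [gPrimitive, gIntegrand, derivative_sum, add_pow, Finset.mul_sum]
  refine Finset.sum_congr rfl fun j _ => ?_
  have hcoeff : C ((n.choose j : ℝ) / (m + j + 1)) * (1 + C p * X) ^ (n - j)
      * ((m + j + 1 : ℕ) : ℝ[X]) = (n.choose j : ℝ[X]) * (1 + C p * X) ^ (n - j) := by
    rw [← map_natCast C, ← map_natCast C (n.choose j), mul_right_comm, ← C_mul]
    congr 2
    push_cast
    field_simp
  rw [derivative_C_mul_X_pow, hcoeff, Nat.add_sub_cancel]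
  simp only [map_mul, map_natCast, map_pow]
  ring

theorem eval_map_evalRingHom_gIntegrand (m n : ℕ) (p t s : ℝ) :
    ((gIntegrand m n p).map (evalRingHom t)).eval s = s ^ m * (1 + t * p + s) ^ n := by
  simp only [gIntegrand, Polynomial.map_mul, Polynomial.map_pow, Polynomial.map_add, map_X,
    map_C, eval_mul, eval_pow, eval_add, eval_X, eval_C, coe_evalRingHom, eval_one]
  ring

theorem integral_eq_eval_gPrimitive (m n : ℕ) (p t b : ℝ) :
    ∫ s in (0:ℝ)..b, s ^ m * (1 + t * p + s) ^ n
      = ((gPrimitive m n p).map (evalRingHom t)).eval b := by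
  set Ψ := (gPrimitive m n p).map (evalRingHom t)
  have hΨ₀ : Ψ.eval 0 = 0 := by simp [Ψ, gPrimitive, eval_finsetSum]
  have hΨ' : ∀ s, Ψ.derivative.eval s = s ^ m * (1 + t * p + s) ^ n := fun s => by
    rw [derivative_map, derivative_gPrimitive, eval_map_evalRingHom_gIntegrand]
  simp_rw [← hΨ']
  rw [intervalIntegral.integral_eq_sub_of_hasDerivAt (fun s _ => Ψ.hasDerivAt s)
    (Ψ.derivative.continuous.intervalIntegrable _ _), hΨ₀, sub_zero]

theorem G_eq_coeff_eval_gPrimitive (m n k : ℕ) (p x y : ℝ) :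
    G m n k p x y = ((gPrimitive m n p).eval (C x + C y * X)).coeff k := by
  have hpoly : (fun t => ∫ s in (0:ℝ)..(x + t * y), s ^ m * (1 + t * p + s) ^ n)
      = fun t => ((gPrimitive m n p).eval (C x + C y * X)).eval t := by
    ext t
    rw [integral_eq_eval_gPrimitive, eval_eval_eq_eval_map, eval_add, eval_C, eval_mul, eval_C,
      eval_X, mul_comm t]
  rw [G, hpoly, iteratedDeriv_eval_zero]
  field_simp

theorem gIntegrand_eval_C_add_C_mul_X (m n : ℕ) (p x y : ℝ) :
    (gIntegrand m n p).eval (C x + C y * X)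
      = (C x + C y * X) ^ m * (C (1 + x) + C (p + y) * X) ^ n := by
  simp only [gIntegrand, eval_mul, eval_pow, eval_X, eval_add, eval_C, eval_one, C_add, C_1]
  ring

theorem coeff_gIntegrand_eval (m n K : ℕ) (p : ℝ) {x : ℝ} (y : ℝ) (hx : x ≠ 0)
    (hx₁ : 1 + x ≠ 0) :
    ((gIntegrand m n p).eval (C x + C y * X)).coeff K
      = x ^ m * (1 + x) ^ n *
          esymm (m + n) K (fun i => if (i : ℕ) < m then y / x else (p + y) / (1 + x)) := by
  have hprod : (1 + C (y / x) * X) ^ m * (1 + C ((p + y) / (1 + x)) * X) ^ n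
      = ∏ i : Fin (m + n), (1 + C (if (i : ℕ) < m then y / x else (p + y) / (1 + x)) * X) :=
    pow_mul_pow_eq_prod_ite (fun c : ℝ => (1 + C c * X : ℝ[X])) _ _ m n
  rw [gIntegrand_eval_C_add_C_mul_X, C_add_C_mul_X_eq_C_mul _ hx, C_add_C_mul_X_eq_C_mul _ hx₁,
    mul_pow, mul_pow, mul_mul_mul_comm, ← C_pow, ← C_pow, ← C_mul, coeff_C_mul, hprod,
    coeff_prod_one_add_C_mul_X]

/-- ∂G/∂y (x,y) = x^m (1+x)^n σ_{k-1}(λ̌), where λ̌ has m components y/x and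
n components (p+y)/(1+x). -/
theorem G_deriv_y (m n k : ℕ) (hk : 1 ≤ k) (p x y : ℝ) (hx : 0 < x) :
    deriv (fun y => G m n k p x y) y
      = x ^ m * (1 + x) ^ n *
        esymm (m + n) (k - 1)
          (fun i => if (i : ℕ) < m then y / x else (p + y) / (1 + x)) := by
  obtain ⟨k, rfl⟩ := Nat.exists_eq_add_of_le' hk
  have hG : HasDerivAt (fun y => G m n (k + 1) p x y)
      (((gIntegrand m n p).eval (C x + C y * X)).coeff k) y := by
    simpa [G_eq_coeff_eval_gPrimitive, derivative_gPrimitive, coeff_mul_X] using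
      (hasCoeffDerivAt_C_add_C_mul_X x y).eval (gPrimitive m n p) (k + 1)
  rw [hG.deriv, Nat.add_sub_cancel, coeff_gIntegrand_eval _ _ _ _ _ hx.ne' (by positivity)]
end
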